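/- arXiv:1401.1745 — 2 statements merged into one kernel-verified Lean document; each statement's English description precedes it below -/
import Mathlib

section
/- Let X be a distance-regular graph of diameter 3 with intersection array {n−1, c, 1; 1, c, n−1} (a distance-regular 2-fold antipodal cover of K_n) satisfying n = 2c + 2 (i.e., δ = n − 2c − 2 = 0). Then X does not admit perfect state transfer between any pair of vertices at any time. -/
open Matrix

/-- The transition matrix `U(t) = exp(itA)` of the continuous-time quantum walk on `G`. -/
noncomputable def transitionMatrix {V : Type*} [Fintype V] [DecidableEq V]
    (G : SimpleGraph V) (t : ℝ) : Matrix V V ℂ :=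
  letI := Classical.decRel G.Adj
  NormedSpace.exp ((Complex.I * (t : ℂ)) • G.adjMatrix ℂ)

/-- `G` admits perfect state transfer from `u` to `v` at time `t`. -/
def HasPST {V : Type*} [Fintype V] [DecidableEq V]
    (G : SimpleGraph V) (u v : V) (t : ℝ) : Prop :=
  u ≠ v ∧ ∃ μ : ℂ, transitionMatrix G t *ᵥ (Pi.single u 1 : V → ℂ)
      = μ • (Pi.single v 1 : V → ℂ)

/-- `G` is a distance-regular graph of diameter `d` with intersection parameters `b`, `c`. -/
def IsDRG {V : Type*} [Fintype V] [DecidableEq V] (G : SimpleGraph V)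
    (d : ℕ) (b c : ℕ → ℕ) : Prop :=
  G.Connected ∧ (∀ u v, G.dist u v ≤ d) ∧ (∃ u v, G.dist u v = d) ∧
  (∀ i, 1 ≤ i → i ≤ d → ∀ u v : V, G.dist u v = i →
      Nat.card {w : V // G.Adj v w ∧ G.dist u w = i - 1} = c i) ∧
  (∀ i, i ≤ d - 1 → ∀ u v : V, G.dist u v = i →
      Nat.card {w : V // G.Adj v w ∧ G.dist u w = i + 1} = b i)

/-- `G` is a distance-regular 2-fold antipodal cover of `K_n` with parameter `c`,
i.e. a distance-regular graph of diameter 3 with intersection array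
`{n-1, c, 1; 1, c, n-1}`. -/
def IsCoverKn {V : Type*} [Fintype V] [DecidableEq V] (G : SimpleGraph V)
    (n c : ℕ) : Prop :=
  ∃ b' c' : ℕ → ℕ, IsDRG G 3 b' c' ∧
    b' 0 = n - 1 ∧ b' 1 = c ∧ b' 2 = 1 ∧ c' 1 = 1 ∧ c' 2 = c ∧ c' 3 = n - 1

/-!
The distance partition of such a cover is equitable, with intersection matrix `L` (rows indexed
by the distance `i = d(u, v)`, columns by the distances of the neighbours of `v` from `u`). Hence
every eigenvector `g` of `L` lifts, around any vertex `u`, to the left eigenvector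
`w ↦ g (d(u, w))` of `A`. Pairing `U(t) e_u = μ e_v` with these eigenvectors gives
`e^{itθ} g(0) = μ g(d(u, v))`, and, by also centring at `v`, `g(0)² = g(d(u, v))²`.
For `θ = -1` and `g = (2c+1, -1, -1, 2c+1)` this forces `d(u, v) = 3`, as `c ≥ 1` (the
diameter is `3`). Then `θ = -1, ±√(2c+1)`
give `e^{-it} = μ = -e^{±it√(2c+1)}`, so `t√(2c+1) = bπ` and `t(√(2c+1) + 1) = (2a+1)π`.
Writing `t = sπ` yields `b² = (2c+1)s²`, hence `b ≡ s (mod 2)`, while `s + b = 2a + 1` is odd.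
-/

open Finset Fin.NatCast Complex

namespace SimpleGraph

section LocallyFinite

variable {V : Type*} {G : SimpleGraph V} [G.LocallyFinite]

theorem card_neighborFinset_filter_dist_eq_zero {u v : V} {j : ℕ}
    (h : j + 1 < G.dist u v ∨ G.dist u v + 1 < j) :
    #{w ∈ G.neighborFinset v | G.dist u w = j} = 0 := by
  rw [card_eq_zero, filter_eq_empty_iff]
  intro w hw hj
  have := ((G.mem_neighborFinset v w).1 hw).diff_dist_adj (u := u)
  omega

theorem card_neighborFinset_filter_dist_self_eq_zero (u : V) :
    #{w ∈ G.neighborFinset u | G.dist u w = 0} = 0 := by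
  rw [card_eq_zero, filter_eq_empty_iff]
  intro w hw
  have hadj := (G.mem_neighborFinset u w).1 hw
  exact (hadj.reachable.pos_dist_of_ne hadj.ne).ne'

theorem card_neighborFinset_filter_dist_eq_one (v : V) :
    #{w ∈ G.neighborFinset v | G.dist v w = 1} = G.degree v := by
  rw [← card_neighborFinset_eq_degree]
  congr 1
  exact filter_true_of_mem fun w hw => dist_eq_one_iff_adj.2 ((G.mem_neighborFinset v w).1 hw)

theorem sum_card_neighborFinset_filter_dist {m : ℕ} {u : V} (hm : ∀ w, G.dist u w < m)
    (v : V) : ∑ j ∈ range m, #{w ∈ G.neighborFinset v | G.dist u w = j} = G.degree v := by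
  rw [← card_neighborFinset_eq_degree,
    card_eq_sum_card_fiberwise fun w _ => mem_range.2 (hm w)]

end LocallyFinite

variable {V : Type*} [Fintype V] (G : SimpleGraph V) [DecidableRel G.Adj]

-- The first conjunct makes the cast `ℕ → Fin m` (reduction mod `m`) below exact.
def HasIntersectionMatrix {m : ℕ} [NeZero m] (L : Matrix (Fin m) (Fin m) ℕ) : Prop :=
  (∀ u v, G.dist u v < m) ∧
    ∀ u v (j : Fin m), #{w ∈ G.neighborFinset v | G.dist u w = j} = L (G.dist u v : Fin m) j

variable {G}

theorem natCard_adj_and (v : V) (p : V → Prop) [DecidablePred p] :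
    Nat.card {w // G.Adj v w ∧ p w} = #{w ∈ G.neighborFinset v | p w} := by
  rw [Nat.card_eq_fintype_card, Fintype.card_subtype, neighborFinset_eq_filter, filter_filter]

theorem HasIntersectionMatrix.vecMul_adjMatrix_comp_dist {m : ℕ} [NeZero m]
    {L : Matrix (Fin m) (Fin m) ℕ} (hL : G.HasIntersectionMatrix L) {g : Fin m → ℂ} {θ : ℂ}
    (hg : L.map ((↑) : ℕ → ℂ) *ᵥ g = θ • g) (u : V) :
    (fun w => g (G.dist u w : Fin m)) ᵥ* G.adjMatrix ℂ = θ • fun w => g (G.dist u w : Fin m) := by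
  ext v
  have hfiber (j : Fin m) (w : V) : (G.dist u w : Fin m) = j ↔ G.dist u w = j := by
    rw [Fin.ext_iff, Fin.val_natCast, Nat.mod_eq_of_lt (hL.1 u w)]
  rw [adjMatrix_vecMul_apply, ← sum_fiberwise' _ _ g]
  convert congrFun hg (G.dist u v : Fin m) using 1
  · simp only [hfiber, sum_const, hL.2, mulVec, dotProduct, Matrix.map_apply, nsmul_eq_mul]
  · rfl

end SimpleGraph

namespace Matrix

variable {ι : Type*} [Fintype ι] [DecidableEq ι]

-- `NormedSpace.exp` does not depend on the norm; any normed-algebra structure will do.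
attribute [local instance] Matrix.linftyOpNormedRing Matrix.linftyOpNormedAlgebra

theorem vecMul_exp_of_vecMul_eq_smul {M : Matrix ι ι ℂ} {φ : ι → ℂ} {θ : ℂ}
    (h : φ ᵥ* M = θ • φ) : φ ᵥ* NormedSpace.exp M = cexp θ • φ := by
  let B : Matrix ι ι ℂ := of fun _ => φ
  have hB : SemiconjBy B M (algebraMap ℂ _ θ) := by
    rw [SemiconjBy, ← Algebra.smul_def]
    ext i j
    exact congrFun h j
  ext j
  have := congrFun (congrFun hB.exp_right j) j
  rwa [← NormedSpace.algebraMap_exp_comm, ← Algebra.smul_def, ← exp_eq_exp_ℂ] at this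

end Matrix

theorem Int.even_iff_even_of_sq_eq_sq_mul {b s k : ℤ} (hk : Odd k) (h : b ^ 2 = s ^ 2 * k) :
    Even b ↔ Even s := by
  simpa [Int.even_pow, Int.even_mul, Int.not_even_iff_odd.2 hk] using congrArg Even h

open Real in
theorem exists_int_of_cexp_I_mul_eq {x y : ℝ} (h : cexp (I * x) = cexp (I * y)) :
    ∃ n : ℤ, x = y + n * (2 * π) := by
  obtain ⟨n, hn⟩ := exp_eq_exp_iff_exists_int.1 h
  refine ⟨n, ?_⟩
  have : (x : ℂ) = y + n * (2 * π) := by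
    linear_combination (-I) * hn + (x - y - n * (2 * π)) * I_sq
  exact_mod_cast this

open Real in
theorem false_of_cexp_phases {k : ℕ} (hk : Odd k) {t : ℝ} {μ : ℂ}
    (h₁ : cexp (I * t * (-1)) = μ) (h₂ : cexp (I * t * √k) = -μ)
    (h₃ : cexp (I * t * -√k) = -μ) : False := by
  set q := √k
  obtain ⟨b, hb⟩ := exists_int_of_cexp_I_mul_eq (x := t * q) (y := -(t * q)) <| by
    push_cast
    rw [← mul_assoc, h₂, ← mul_neg, ← mul_assoc, h₃]
  obtain ⟨a, ha⟩ := exists_int_of_cexp_I_mul_eq (x := t * q) (y := -t + π) <| by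
    push_cast
    rw [← mul_assoc, h₂, show I * (-t + π) = I * t * (-1) + π * I by ring, Complex.exp_add, h₁,
      exp_pi_mul_I, mul_neg_one]
  -- the two relations give `t = sπ`
  set s : ℤ := 1 + 2 * a - b
  have hsq : s * q = b := by
    have : π * (s * q - b) = 0 := by
      push_cast [s]
      linear_combination (-q) * ha + ((q + 1) / 2) * hb
    linarith [(mul_eq_zero.1 this).resolve_left pi_ne_zero]
  have hbs : b ^ 2 = s ^ 2 * k := by
    have : (b : ℝ) ^ 2 = s ^ 2 * k := by
      rw [← hsq, mul_pow, sq_sqrt (Nat.cast_nonneg k)]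
    exact_mod_cast this
  have hparity := Int.even_iff_even_of_sq_eq_sq_mul (by exact_mod_cast hk) hbs
  have hodd : Odd (s + b) := ⟨a, by ring⟩
  exact Int.not_even_iff_odd.2 hodd (Int.even_add.2 hparity.symm)

section Transfer

variable {V : Type*} [Fintype V] [DecidableEq V] (G : SimpleGraph V) [DecidableRel G.Adj]

theorem transitionMatrix_eq (t : ℝ) :
    transitionMatrix G t = NormedSpace.exp ((I * t) • G.adjMatrix ℂ) := by
  unfold transitionMatrix
  congr

variable {G} {u v : V} {t : ℝ} {μ : ℂ}

theorem cexp_mul_apply_eq_of_transitionMatrix_mulVec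
    (hU : transitionMatrix G t *ᵥ Pi.single u 1 = μ • Pi.single v 1)
    {φ : V → ℂ} {θ : ℂ} (hφ : φ ᵥ* G.adjMatrix ℂ = θ • φ) :
    cexp (I * t * θ) * φ u = μ * φ v := by
  have hexp : φ ᵥ* transitionMatrix G t = cexp (I * t * θ) • φ := by
    rw [transitionMatrix_eq G]
    exact Matrix.vecMul_exp_of_vecMul_eq_smul (by rw [vecMul_smul, hφ, smul_smul])
  have := congrArg (φ ⬝ᵥ ·) hU
  simp only [dotProduct_mulVec, hexp, dotProduct_smul, dotProduct_single, smul_eq_mul,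
    mul_one] at this
  exact this

namespace SimpleGraph.HasIntersectionMatrix

variable {m : ℕ} [NeZero m] {L : Matrix (Fin m) (Fin m) ℕ} {g : Fin m → ℂ} {θ : ℂ}

theorem cexp_mul_eq_of_transitionMatrix_mulVec (hL : G.HasIntersectionMatrix L)
    (hg : L.map (↑) *ᵥ g = θ • g)
    (hU : transitionMatrix G t *ᵥ Pi.single u 1 = μ • Pi.single v 1) :
    cexp (I * t * θ) * g 0 = μ * g (G.dist u v) := by
  simpa using cexp_mul_apply_eq_of_transitionMatrix_mulVec hU (hL.vecMul_adjMatrix_comp_dist hg u)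

theorem sq_eq_of_transitionMatrix_mulVec (hL : G.HasIntersectionMatrix L)
    (hg : L.map (↑) *ᵥ g = θ • g)
    (hU : transitionMatrix G t *ᵥ Pi.single u 1 = μ • Pi.single v 1) :
    g 0 ^ 2 = g (G.dist u v) ^ 2 := by
  have hu := hL.cexp_mul_eq_of_transitionMatrix_mulVec hg hU
  have hv := cexp_mul_apply_eq_of_transitionMatrix_mulVec hU (hL.vecMul_adjMatrix_comp_dist hg v)
  simp only [dist_comm (u := v), dist_self, Nat.cast_zero] at hv
  refine mul_left_cancel₀ (exp_ne_zero (I * t * θ)) ?_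
  linear_combination g 0 * hu - g (G.dist u v) * hv

end SimpleGraph.HasIntersectionMatrix

end Transfer

open SimpleGraph

-- intersection array `{n-1, c, 1; 1, c, n-1}`
def coverIntersectionMatrix (n c : ℕ) : Matrix (Fin 4) (Fin 4) ℕ :=
  !![0, n - 1, 0, 0;
     1, n - 2 - c, c, 0;
     0, c, n - 2 - c, 1;
     0, 0, n - 1, 0]

theorem coverIntersectionMatrix_two_mul_add_two (c : ℕ) :
    coverIntersectionMatrix (2 * c + 2) c =
      !![0, 2 * c + 1, 0, 0;
         1, c, c, 0;
         0, c, c, 1;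
         0, 0, 2 * c + 1, 0] := by
  rw [coverIntersectionMatrix, show 2 * c + 2 - 1 = 2 * c + 1 by omega,
    show 2 * c + 2 - 2 - c = c by omega]

theorem coverIntersectionMatrix_mulVec_neg_one (c : ℕ) :
    (coverIntersectionMatrix (2 * c + 2) c).map ((↑) : ℕ → ℂ) *ᵥ
        ![(2 * c + 1 : ℂ), -1, -1, 2 * c + 1]
      = (-1 : ℂ) • ![(2 * c + 1 : ℂ), -1, -1, 2 * c + 1] := by
  ext i
  fin_cases i <;>
    simp [coverIntersectionMatrix_two_mul_add_two, mulVec, dotProduct, Fin.sum_univ_four] <;> ring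

theorem coverIntersectionMatrix_mulVec_of_sq_eq {c : ℕ} {q : ℂ} (hq : q ^ 2 = 2 * c + 1) :
    (coverIntersectionMatrix (2 * c + 2) c).map ((↑) : ℕ → ℂ) *ᵥ ![q, 1, -1, -q]
      = q • ![q, 1, -1, -q] := by
  ext i
  fin_cases i <;>
    simp [coverIntersectionMatrix_two_mul_add_two, mulVec, dotProduct, Fin.sum_univ_four] <;>
    first | linear_combination hq | linear_combination -hq

section Cover

variable {V : Type*} [Fintype V] [DecidableEq V] {G : SimpleGraph V} [DecidableRel G.Adj]
  {n c : ℕ}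

theorem IsCoverKn.hasIntersectionMatrix (hcover : IsCoverKn G n c) :
    G.HasIntersectionMatrix (coverIntersectionMatrix n c) := by
  obtain ⟨b, c', ⟨hconn, hdiam, -, hc, hb⟩, hb0, hb1, hb2, hc1, hc2, hc3⟩ := hcover
  simp only [natCard_adj_and] at hc hb
  refine ⟨fun u v => Nat.lt_succ_of_le (hdiam u v), fun u v j => ?_⟩
  have hdeg : G.degree v = n - 1 := by
    rw [← card_neighborFinset_filter_dist_eq_one, hb 0 (by omega) v v dist_self, hb0]
  have hsum := sum_card_neighborFinset_filter_dist (fun w => Nat.lt_succ_of_le (hdiam u w)) v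
  simp only [hdeg, sum_range_succ, sum_range_zero, zero_add] at hsum
  obtain ⟨i, hi⟩ : ∃ i, G.dist u v = i := ⟨_, rfl⟩
  have hi3 : i ≤ 3 := hi ▸ hdiam u v
  have hpred (h : 1 ≤ i) := hc i h hi3 u v hi
  have hsucc (h : i ≤ 2) := hb i h u v hi
  have hself (h : i = 0) : #{w ∈ G.neighborFinset v | G.dist u w = 0} = 0 := by
    obtain rfl := hconn.dist_eq_zero_iff.1 (hi.trans h)
    exact card_neighborFinset_filter_dist_self_eq_zero u
  have hfar (j : ℕ) (h : j + 1 < i ∨ i + 1 < j) :=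
    card_neighborFinset_filter_dist_eq_zero (G := G) (v := v) (hi ▸ h)
  have := hfar 0; have := hfar 1; have := hfar 2; have := hfar 3
  -- Row `i`: the entries at `i ∓ 1` are `c_i` and `b_i`, those at distance `≥ 2` from the
  -- diagonal vanish, and the row sums to the valency `n - 1`.
  rw [hi]
  interval_cases i <;> fin_cases j <;>
    simp only [coverIntersectionMatrix, Matrix.of_apply, Matrix.cons_val, Fin.reduceFinMk,
      Nat.cast_zero, Nat.cast_one, Nat.cast_ofNat, Nat.reduceAdd, Nat.reduceSub] at * <;> omega

theorem IsCoverKn.one_le (hcover : IsCoverKn G n c) (hdelta : n = 2 * c + 2) : 1 ≤ c := by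
  have hL := hcover.hasIntersectionMatrix
  obtain ⟨-, -, ⟨hconn, -, ⟨u, v, huv⟩, -⟩, -⟩ := hcover
  have hv : #{w ∈ G.neighborFinset v | G.dist u w = 2} = n - 1 := by
    simpa [huv, coverIntersectionMatrix] using hL.2 u v 2
  obtain ⟨w, hw⟩ := card_pos.1 (by omega : 0 < #{w ∈ G.neighborFinset v | G.dist u w = 2})
  have huw : G.dist u w = 2 := (mem_filter.1 hw).2
  obtain ⟨-, -, x, hx⟩ := edist_eq_two_iff.1 <| by
    rw [← (hconn u w).coe_dist_eq_edist, huw]; rfl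
  rw [mem_commonNeighbors] at hx
  have hw' : #{x ∈ G.neighborFinset w | G.dist u x = 1} = c := by
    simpa [huw, coverIntersectionMatrix] using hL.2 u w 1
  rw [← hw']
  exact card_pos.2 ⟨x, mem_filter.2 ⟨(G.mem_neighborFinset w x).2 hx.2,
    dist_eq_one_iff_adj.2 hx.1⟩⟩

variable {u v : V} {t : ℝ} {μ : ℂ}

theorem IsCoverKn.dist_eq_three_of_transitionMatrix_mulVec (hcover : IsCoverKn G n c)
    (hdelta : n = 2 * c + 2) (huv : u ≠ v)
    (hU : transitionMatrix G t *ᵥ Pi.single u 1 = μ • Pi.single v 1) : G.dist u v = 3 := by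
  have hc := hcover.one_le hdelta
  have hL := hcover.hasIntersectionMatrix
  subst hdelta
  have hsq := hL.sq_eq_of_transitionMatrix_mulVec (coverIntersectionMatrix_mulVec_neg_one c) hU
  obtain ⟨-, -, ⟨hconn, -⟩, -⟩ := hcover
  have h0 := hconn.pos_dist_of_ne huv
  have h3 := hL.1 u v
  interval_cases G.dist u v <;>
    simp only [Nat.cast_one, Nat.cast_ofNat, Matrix.cons_val, neg_one_sq] at hsq ⊢ <;>
    norm_cast at hsq <;> nlinarith

namespace SimpleGraph.HasIntersectionMatrix

theorem cexp_neg_one_eq (hL : G.HasIntersectionMatrix (coverIntersectionMatrix (2 * c + 2) c))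
    (hU : transitionMatrix G t *ᵥ Pi.single u 1 = μ • Pi.single v 1) (hd : G.dist u v = 3) :
    cexp (I * t * (-1)) = μ := by
  have h := hL.cexp_mul_eq_of_transitionMatrix_mulVec (coverIntersectionMatrix_mulVec_neg_one c) hU
  simp only [hd, Nat.cast_ofNat, Matrix.cons_val] at h
  exact mul_right_cancel₀ (by exact_mod_cast (2 * c).succ_ne_zero) h

theorem cexp_eq_neg_of_sq_eq
    (hL : G.HasIntersectionMatrix (coverIntersectionMatrix (2 * c + 2) c))
    (hU : transitionMatrix G t *ᵥ Pi.single u 1 = μ • Pi.single v 1) (hd : G.dist u v = 3)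
    {q : ℂ} (hq : q ^ 2 = 2 * c + 1) : cexp (I * t * q) = -μ := by
  have h := hL.cexp_mul_eq_of_transitionMatrix_mulVec (coverIntersectionMatrix_mulVec_of_sq_eq hq) hU
  simp only [hd, Nat.cast_ofNat, Matrix.cons_val] at h
  have hq₀ : q ≠ 0 := by
    rintro rfl
    norm_cast at hq
  exact mul_right_cancel₀ hq₀ (by linear_combination h)

end SimpleGraph.HasIntersectionMatrix

end Cover

/-- A distance-regular 2-fold antipodal cover of `K_n` with `δ = 0`
(i.e. `n = 2c + 2`) admits no perfect state transfer. -/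
theorem stmt_6 {V : Type*} [Fintype V] [DecidableEq V]
    (G : SimpleGraph V) (n c : ℕ)
    (hcover : IsCoverKn G n c)
    (hdelta : n = 2 * c + 2) :
    ∀ (u v : V) (t : ℝ), ¬ HasPST G u v t := by
  classical
  rintro u v t ⟨huv, μ, hU⟩
  have hd := hcover.dist_eq_three_of_transitionMatrix_mulVec hdelta huv hU
  have hL := hcover.hasIntersectionMatrix
  subst hdelta
  have hq : (√((2 * c + 1 : ℕ) : ℝ) : ℂ) ^ 2 = 2 * c + 1 := by
    rw [← ofReal_pow, Real.sq_sqrt (Nat.cast_nonneg _)]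
    push_cast
    ring
  exact false_of_cexp_phases (odd_two_mul_add_one c) (hL.cexp_neg_one_eq hU hd)
    (hL.cexp_eq_neg_of_sq_eq hU hd hq) (hL.cexp_eq_neg_of_sq_eq hU hd (by rw [neg_sq, hq]))
end

section
/- For every n > 1, the Johnson graph J(2n, n) — the graph whose vertices are the n-element subsets of a fixed 2n-element set, two subsets being adjacent iff their intersection has exactly n−1 elements — does not admit perfect state transfer between any pair of vertices at any time. -/
open Matrix

/-- The Johnson graph `J(2n, n)`: vertices are the `n`-element subsets of a fixed
`2n`-element set, adjacent iff their intersection has exactly `n - 1` elements. -/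
def johnsonGraph (n : ℕ) : SimpleGraph {s : Finset (Fin (2 * n)) // s.card = n} :=
  SimpleGraph.fromRel (fun s t => (s.1 ∩ t.1).card = n - 1)

/-!
Since `U(t) = exp(itA)` is symmetric, `U(t) e_u = μ e_v` forces `e^{itθ} x u = μ x v` for every
eigenvector `x` of `A` with eigenvalue `θ`. On `J(2n, n)`, suitable functions of `k = #(s ∩ u)`
are eigenvectors: `1`, `2k - n` and `(2n - 1)(2k - n)² - n²`, with eigenvalues `n²`, `n² - 2n`
and `n² - 4n + 2`. The first two give `|2 #(u ∩ v) - n| = n`, so `v` is the complement of `u`.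
Then `e^{itn²} = μ`, `e^{it(n² - 2n)} = -μ` and, as the third eigenvector takes the value
`2n²(n - 1) ≠ 0` at both `u` and `v`, `e^{it(n² - 4n + 2)} = μ`. Hence `e^{2it} = 1`, and then
`μ = -μ`, which is impossible as `μ = e^{itn²}`.
-/

open Finset

open scoped Norms.Operator in
theorem Matrix.exp_mulVec_of_mulVec_eq_smul {m 𝕂 : Type*} [Fintype m] [DecidableEq m] [RCLike 𝕂]
    {M : Matrix m m 𝕂} {x : m → 𝕂} {c : 𝕂} (h : M *ᵥ x = c • x) :
    NormedSpace.exp M *ᵥ x = NormedSpace.exp c • x := by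
  have hpow (k : ℕ) : M ^ k *ᵥ x = c ^ k • x := by
    induction k with
    | zero => simp
    | succ k ih => rw [pow_succ', ← mulVec_mulVec, ih, mulVec_smul, h, smul_smul, ← pow_succ]
  have hM := (NormedSpace.exp_series_hasSum_exp' (𝕂 := 𝕂) M).map
    (mulVec.addMonoidHomLeft x) (continuous_id.matrix_mulVec continuous_const)
  have hc := (NormedSpace.exp_series_hasSum_exp' (𝕂 := 𝕂) c).smul_const x
  refine hM.unique ?_
  simpa [Function.comp_def, mulVec.addMonoidHomLeft, smul_mulVec, hpow, smul_smul] using hc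

section TransitionMatrix

variable {V : Type*} [Fintype V] [DecidableEq V] {G : SimpleGraph V}

theorem transitionMatrix_eq_exp [DecidableRel G.Adj] (t : ℝ) :
    transitionMatrix G t = NormedSpace.exp ((Complex.I * t) • G.adjMatrix ℂ) := by
  unfold transitionMatrix
  congr

theorem transitionMatrix_transpose (t : ℝ) :
    (transitionMatrix G t)ᵀ = transitionMatrix G t := by
  classical
  rw [transitionMatrix_eq_exp, ← Matrix.exp_transpose, transpose_smul, G.transpose_adjMatrix]

theorem transitionMatrix_mulVec_of_mulVec_eq_smul [DecidableRel G.Adj] {x : V → ℂ} {c : ℂ}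
    (hx : G.adjMatrix ℂ *ᵥ x = c • x) (t : ℝ) :
    transitionMatrix G t *ᵥ x = Complex.exp (Complex.I * t * c) • x := by
  rw [transitionMatrix_eq_exp, Complex.exp_eq_exp_ℂ]
  apply Matrix.exp_mulVec_of_mulVec_eq_smul
  rw [smul_mulVec, hx, smul_smul]

theorem exp_mul_apply_eq_of_transitionMatrix_mulVec_single [DecidableRel G.Adj] {u v : V}
    {t : ℝ} {μ : ℂ} (hμ : transitionMatrix G t *ᵥ Pi.single u 1 = μ • Pi.single v 1)
    {x : V → ℂ} {c : ℂ} (hx : G.adjMatrix ℂ *ᵥ x = c • x) :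
    Complex.exp (Complex.I * t * c) * x u = μ * x v := by
  have h := dotProduct_mulVec x (transitionMatrix G t) (Pi.single u 1)
  rw [hμ, ← transitionMatrix_transpose, vecMul_transpose,
    transitionMatrix_mulVec_of_mulVec_eq_smul hx] at h
  simpa [dotProduct_single, mul_comm] using h.symm

end TransitionMatrix

namespace Finset

variable {α : Type*} [DecidableEq α] {s w : Finset α} {x y : α}

theorem card_insert_erase (hx : x ∈ s) (hy : y ∉ s) : #(insert y (s.erase x)) = #s := by
  rw [card_insert_of_notMem fun h => hy (mem_of_mem_erase h), card_erase_add_one hx]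

theorem inter_insert_erase (hy : y ∉ s) : s ∩ insert y (s.erase x) = s.erase x := by
  ext a
  grind

theorem sdiff_insert_erase (hx : x ∈ s) (hy : y ∉ s) : s \ insert y (s.erase x) = {x} := by
  ext a
  grind

theorem insert_erase_sdiff (hy : y ∉ s) : insert y (s.erase x) \ s = {y} := by
  ext a
  grind

theorem eq_and_eq_of_insert_erase_eq {x' y' : α} (hx : x ∈ s) (hy : y ∉ s) (hx' : x' ∈ s)
    (hy' : y' ∉ s) (h : insert y (s.erase x) = insert y' (s.erase x')) : x = x' ∧ y = y' := by
  constructor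
  · simpa [sdiff_insert_erase hx hy, sdiff_insert_erase hx' hy'] using congrArg (s \ ·) h
  · simpa [insert_erase_sdiff hy, insert_erase_sdiff hy'] using congrArg (· \ s) h

theorem exists_eq_insert_erase (hne : s ≠ w) (hcard : #w = #s) (hinter : #(s ∩ w) = #s - 1) :
    ∃ x ∈ s, ∃ y ∉ s, w = insert y (s.erase x) := by
  have hsw : (s \ w).Nonempty := by
    rw [sdiff_nonempty]
    exact fun h => hne (eq_of_subset_of_card_le h hcard.le)
  have hsw_card := card_sdiff_add_card_inter s w
  have hws_card := card_sdiff_add_card_inter w s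
  rw [inter_comm] at hws_card
  obtain ⟨x, hx⟩ : ∃ x, s \ w = {x} := by
    rw [← card_eq_one]
    have := hsw.card_pos
    omega
  obtain ⟨y, hy⟩ : ∃ y, w \ s = {y} := by
    rw [← card_eq_one]
    have := hsw.card_pos
    omega
  have hx' := Finset.ext_iff.1 hx
  have hy' := Finset.ext_iff.1 hy
  simp only [mem_sdiff, mem_singleton] at hx' hy'
  refine ⟨x, ((hx' x).2 rfl).1, y, ((hy' y).2 rfl).2, ?_⟩
  ext a
  grind

theorem card_insert_erase_inter_add (hx : x ∈ s) (hy : y ∉ s) (u : Finset α) :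
    #(insert y (s.erase x) ∩ u) + (if x ∈ u then 1 else 0)
      = #(s ∩ u) + (if y ∈ u then 1 else 0) := by
  split_ifs with hxu hyu hyu
  · rw [insert_inter_of_mem hyu, erase_inter, card_insert_of_notMem (by simp [hy]),
      card_erase_add_one (mem_inter.2 ⟨hx, hxu⟩)]
  · rw [insert_inter_of_notMem hyu, erase_inter, card_erase_add_one (mem_inter.2 ⟨hx, hxu⟩),
      add_zero]
  · rw [insert_inter_of_mem hyu, erase_inter, erase_eq_of_notMem (by simp [hxu]),
      card_insert_of_notMem (by simp [hy])]
  · rw [insert_inter_of_notMem hyu, erase_inter, erase_eq_of_notMem (by simp [hxu])]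

end Finset

section Johnson

variable {n : ℕ}

theorem johnsonGraph_adj_iff {s t : {s : Finset (Fin (2 * n)) // s.card = n}} :
    (johnsonGraph n).Adj s t ↔ ∃ x ∈ s.1, ∃ y ∉ s.1, t.1 = insert y (s.1.erase x) := by
  rw [johnsonGraph, SimpleGraph.fromRel_adj, inter_comm t.1, or_self]
  constructor
  · rintro ⟨hne, hinter⟩
    exact exists_eq_insert_erase (Subtype.coe_ne_coe.2 hne) (t.2.trans s.2.symm)
      (by rw [s.2]; exact hinter)
  · rintro ⟨x, hx, y, hy, ht⟩
    refine ⟨fun h => hy ?_, ?_⟩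
    · rw [h, ht]
      exact mem_insert_self y _
    · rw [ht, inter_insert_erase hy, card_erase_of_mem hx, s.2]

theorem johnsonGraph_adjMatrix_mulVec_apply {R : Type*} [NonAssocSemiring R]
    [DecidableRel (johnsonGraph n).Adj] (f : Finset (Fin (2 * n)) → R)
    (s : {s : Finset (Fin (2 * n)) // s.card = n}) :
    ((johnsonGraph n).adjMatrix R *ᵥ fun t => f t.1) s
      = ∑ p ∈ s.1 ×ˢ s.1ᶜ, f (insert p.2 (s.1.erase p.1)) := by
  rw [SimpleGraph.adjMatrix_mulVec_apply]
  symm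
  refine sum_bij (fun p hp => ⟨insert p.2 (s.1.erase p.1), ?_⟩) ?_ ?_ ?_ fun _ _ => rfl
  · rw [mem_product, mem_compl] at hp
    rw [card_insert_erase hp.1 hp.2, s.2]
  · rintro ⟨x, y⟩ hp
    rw [mem_product, mem_compl] at hp
    rw [SimpleGraph.mem_neighborFinset, johnsonGraph_adj_iff]
    exact ⟨x, hp.1, y, hp.2, rfl⟩
  · rintro ⟨x, y⟩ hp ⟨x', y'⟩ hp' h
    rw [mem_product, mem_compl] at hp hp'
    obtain ⟨rfl, rfl⟩ := eq_and_eq_of_insert_erase_eq hp.1 hp.2 hp'.1 hp'.2 (congrArg Subtype.val h)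
    rfl
  · intro t ht
    rw [SimpleGraph.mem_neighborFinset, johnsonGraph_adj_iff] at ht
    obtain ⟨x, hx, y, hy, ht⟩ := ht
    exact ⟨(x, y), mem_product.2 ⟨hx, mem_compl.2 hy⟩, Subtype.ext ht.symm⟩

/-- For `#(s ∩ u) = k`, the swaps `s ↦ insert y (s.erase x)` lower `k` in `k²` ways, raise it
in `(n - k)²` ways and keep it in `2k(n - k)` ways; so a function of `#(s ∩ u)` is an eigenvector
as soon as it satisfies this three-term recurrence. -/
theorem johnsonGraph_adjMatrix_mulVec_radial {R : Type*} [CommRing R]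
    [DecidableRel (johnsonGraph n).Adj] (u : {s : Finset (Fin (2 * n)) // s.card = n})
    {φ : R → R} {θ : R}
    (hφ : ∀ k, k ^ 2 * φ (k - 1) + (n - k) ^ 2 * φ (k + 1) + 2 * k * (n - k) * φ k = θ * φ k) :
    (johnsonGraph n).adjMatrix R *ᵥ (fun t => φ #(t.1 ∩ u.1))
      = θ • fun t => φ #(t.1 ∩ u.1) := by
  funext s
  set k := #(s.1 ∩ u.1)
  have hswap : ∀ x ∈ s.1, ∀ y ∈ s.1ᶜ, φ #(insert y (s.1.erase x) ∩ u.1)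
      = if x ∈ u.1 then (if y ∈ u.1 then φ k else φ (k - 1))
        else (if y ∈ u.1 then φ (k + 1) else φ k) := by
    intro x hx y hy
    have h := card_insert_erase_inter_add hx (mem_compl.1 hy) u.1
    split_ifs at h ⊢ <;> congr 1 <;>
      (have h := congrArg (Nat.cast (R := R)) h; push_cast at h; linear_combination h)
  have hout : #(s.1 \ u.1) + k = n := (card_sdiff_add_card_inter s.1 u.1).trans s.2
  have hin : #(s.1ᶜ ∩ u.1) + k = n := by
    rw [inter_comm, ← sdiff_eq_inter_compl]
    have h := card_sdiff_add_card_inter u.1 s.1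
    rwa [inter_comm, u.2] at h
  have hfar : #(s.1ᶜ \ u.1) = k := by
    have := card_union_add_card_inter s.1 u.1
    rw [sdiff_eq_inter_compl, ← compl_union, card_compl, Fintype.card_fin]
    omega
  rw [johnsonGraph_adjMatrix_mulVec_apply (fun w => φ #(w ∩ u.1)), sum_product,
    sum_congr rfl fun x hx => sum_congr rfl (hswap x hx)]
  simp only [sum_ite_irrel, sum_ite, filter_mem_eq_inter, filter_notMem_eq_sdiff, sum_const,
    nsmul_eq_mul, Pi.smul_apply, smul_eq_mul]
  have hcast (m : ℕ) (h : m + k = n) : (m : R) = n - k := by rw [← h]; push_cast; ring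
  rw [hcast _ hout, hcast _ hin, hfar, ← hφ]
  ring

theorem johnsonGraph_exp_mul_radial_eq [DecidableRel (johnsonGraph n).Adj]
    {u v : {s : Finset (Fin (2 * n)) // s.card = n}} {t : ℝ} {μ : ℂ}
    (hμ : transitionMatrix (johnsonGraph n) t *ᵥ Pi.single u 1 = μ • Pi.single v 1)
    {φ : ℂ → ℂ} {θ : ℂ}
    (hφ : ∀ k, k ^ 2 * φ (k - 1) + (n - k) ^ 2 * φ (k + 1) + 2 * k * (n - k) * φ k = θ * φ k) :
    Complex.exp (Complex.I * t * θ) * φ n = μ * φ #(v.1 ∩ u.1) := by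
  simpa [u.2] using exp_mul_apply_eq_of_transitionMatrix_mulVec_single hμ
    (johnsonGraph_adjMatrix_mulVec_radial u hφ)

theorem eq_zero_or_eq_of_norm_two_mul_sub {k n : ℕ} (h : ‖(2 * k - n : ℂ)‖ = n) :
    k = 0 ∨ k = n := by
  have h' : ‖((2 * k - n : ℤ) : ℂ)‖ = n := by push_cast; exact h
  rw [Complex.norm_intCast] at h'
  have h'' : |(2 * k - n : ℤ)| = n := by exact_mod_cast h'
  rcases abs_eq (Int.natCast_nonneg n) |>.1 h'' with h | h <;> omega

theorem johnsonGraph_card_inter_eq_zero_of_transitionMatrix_mulVec_single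
    [DecidableRel (johnsonGraph n).Adj] {u v : {s : Finset (Fin (2 * n)) // s.card = n}}
    (huv : u ≠ v) {t : ℝ} {μ : ℂ}
    (hμ : transitionMatrix (johnsonGraph n) t *ᵥ Pi.single u 1 = μ • Pi.single v 1) :
    #(v.1 ∩ u.1) = 0 := by
  have hphase (θ : ℂ) (hθ : θ.im = 0) : ‖Complex.exp (Complex.I * t * θ)‖ = 1 := by
    rw [Complex.norm_exp]
    simp [hθ]
  have h₀ := johnsonGraph_exp_mul_radial_eq hμ (φ := fun _ => 1) (θ := n ^ 2) fun _ => by ring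
  have h₁ := johnsonGraph_exp_mul_radial_eq hμ (φ := fun k => 2 * k - n) (θ := n ^ 2 - 2 * n)
    fun k => by ring
  have hμ₁ : ‖μ‖ = 1 := by
    have h := congrArg norm h₀
    rwa [mul_one, mul_one, hphase _ (by norm_cast), eq_comm] at h
  have h := congrArg norm h₁
  rw [norm_mul, norm_mul, hphase _ (by norm_cast), hμ₁, one_mul, one_mul, two_mul,
    add_sub_cancel_right, Complex.norm_natCast] at h
  refine (eq_zero_or_eq_of_norm_two_mul_sub h.symm).resolve_right fun hk => huv ?_
  have hvu : v.1 ⊆ u.1 := inter_eq_left.1 <|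
    eq_of_subset_of_card_le inter_subset_left (by rw [hk, v.2])
  exact (Subtype.ext (eq_of_subset_of_card_le hvu (by rw [u.2, v.2]))).symm

end Johnson

open Complex in
theorem false_of_exp_mul_eigenvalues (n : ℕ) {a μ : ℂ} (h₀ : exp (a * n ^ 2) = μ)
    (h₁ : exp (a * (n ^ 2 - 2 * n)) = -μ) (h₂ : exp (a * (n ^ 2 - 4 * n + 2)) = μ) : False := by
  have hμ : μ ≠ 0 := h₀ ▸ exp_ne_zero _
  have e₁ : exp (a * n ^ 2) = exp (a * (n ^ 2 - 2 * n)) * exp (2 * a) ^ n := by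
    rw [← exp_nat_mul, ← exp_add]
    ring_nf
  have e₂ : exp (a * n ^ 2) * exp (a * (n ^ 2 - 4 * n + 2))
      = exp (a * (n ^ 2 - 2 * n)) ^ 2 * exp (2 * a) := by
    rw [← exp_nat_mul, ← exp_add, ← exp_add]
    ring_nf
  rw [h₀, h₁] at e₁
  rw [h₀, h₁, h₂] at e₂
  have hw : exp (2 * a) = 1 := mul_left_cancel₀ (pow_ne_zero 2 hμ) (by linear_combination -e₂)
  rw [hw, one_pow] at e₁
  exact hμ (by linear_combination e₁ / 2)

/-- For every `n > 1`, the Johnson graph `J(2n, n)` does not admit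
perfect state transfer between any pair of vertices at any time. -/
theorem stmt_14 (n : ℕ) (hn : 1 < n) :
    ∀ (u v : {s : Finset (Fin (2 * n)) // s.card = n}) (t : ℝ),
      ¬ HasPST (johnsonGraph n) u v t := by
  classical
  rintro u v t ⟨huv, μ, hμ⟩
  have hk := johnsonGraph_card_inter_eq_zero_of_transitionMatrix_mulVec_single huv hμ
  have h₀ := johnsonGraph_exp_mul_radial_eq hμ (φ := fun _ => 1) (θ := n ^ 2) fun _ => by ring
  have h₁ := johnsonGraph_exp_mul_radial_eq hμ (φ := fun k => 2 * k - n) (θ := n ^ 2 - 2 * n)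
    fun k => by ring
  have h₂ := johnsonGraph_exp_mul_radial_eq hμ
    (φ := fun k => (2 * n - 1) * (2 * k - n) ^ 2 - n ^ 2) (θ := n ^ 2 - 4 * n + 2) fun k => by ring
  rw [hk] at h₁ h₂
  have hn₀ : (n : ℂ) ≠ 0 := by exact_mod_cast (by omega : n ≠ 0)
  have hn₁ : (n : ℂ) - 1 ≠ 0 := sub_ne_zero.2 (by exact_mod_cast (by omega : n ≠ 1))
  refine false_of_exp_mul_eigenvalues n (a := Complex.I * t) (μ := μ) ?_ ?_ ?_
  · simpa using h₀
  · apply mul_right_cancel₀ hn₀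
    linear_combination h₁
  · apply mul_right_cancel₀ (mul_ne_zero (mul_ne_zero two_ne_zero (pow_ne_zero 2 hn₀)) hn₁)
    linear_combination h₂
end
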